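/- arXiv:2303.14591 — 3 statements merged into one kernel-verified Lean document; each statement's English description precedes it below -/
import Mathlib

section
/- Let V be a finite set of nodes partitioned by a binary sensitive attribute s : V → {0,1} into nonempty groups S₀ and S₁. Let each node k ∈ V have a nonempty neighborhood N(k) ⊆ V and attention coefficients α_{kj} ≥ 0 for j ∈ N(k) satisfying Σ_{j∈N(k)} α_{kj} = 1. Let W ∈ ℝ^{F'×F}, let h_j ∈ ℝ^F be input representations, c_j = W h_j ∈ ℝ^{F'}, z_k = Σ_{j∈N(k)} α_{kj} c_j, and h'_k = σ(z_k) with σ : ℝ → ℝ an L-Lipschitz activation applied entrywise. Let S^χ be the set of nodes having at least one neighbor of the opposite sensitive group, S_s^χ = S_s ∩ S^χ, and R_s^χ = |S_s^χ|/|S_s| for s = 0,1. Assume (A1) ‖c_j − c̄_{s(j)}‖_∞ ≤ Δc and ‖z_j − z̄_{s(j)}‖_∞ ≤ Δz for every j ∈ V, and (A2) there exists α^χ ∈ [0,1] such that for every node k ∈ S^χ, Σ_{j∈N(k), s(j)≠s(k)} α_{kj} = α^χ. Then the disparity of the output representations satisfies ‖h̄'₀ − h̄'₁‖₂ ≤ L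 ( σmax(W) · |R₁^χ α^χ + R₀^χ α^χ − 1| · ‖h̄₀ − h̄₁‖₂ + 2√(F') Δc + 2√(F') Δz ). -/
open Finset

/-- Group mean of vectors over a finite index set. -/
noncomputable def gmean {V : Type*} {d : ℕ} (S : Finset V)
    (x : V → EuclideanSpace ℝ (Fin d)) : EuclideanSpace ℝ (Fin d) :=
  (S.card : ℝ)⁻¹ • ∑ j ∈ S, x j

/-- The sensitive group of nodes with sensitive attribute `t`. -/
def grp {V : Type*} [Fintype V] (s : V → Fin 2) (t : Fin 2) : Finset V :=
  Finset.univ.filter fun j => s j = t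

/-!
Fix an output coordinate. Each node's attention splits into the part paid to its own group and
the part paid to the other group, which is `αχ` on `Sχ` and `0` elsewhere. Replacing every `c j`
by its group mean (an error of at most `Δc`, since the weights form a convex combination) shows
that the group mean of `z` over `S_t` is `c̄_t - R_t αχ (c̄_t - c̄_u)` up to `Δc`, so
`z̄₀ - z̄₁ = (1 - R₀ αχ - R₁ αχ)(c̄₀ - c̄₁)` up to `2 Δc`. Since `z` stays within `Δz` of its group
mean, Lipschitz continuity puts the group mean of `σ ∘ z` within `L Δz` of `σ (z̄_t)`. Adding the
squares of these coordinatewise bounds gives the factor `√F'`, and `c̄₀ - c̄₁ = W (h̄₀ - h̄₁)`.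
-/

open scoped BigOperators

lemma nonneg_of_abs_sub_le_mul_abs_sub {σ : ℝ → ℝ} {L : ℝ}
    (hσ : ∀ a b, |σ a - σ b| ≤ L * |a - b|) : 0 ≤ L :=
  nonneg_of_mul_nonneg_left ((abs_nonneg _).trans (hσ 1 0)) (by simp)

lemma abs_sub_le_of_abs_sub_mix_le {a₀ a₁ x₀ x₁ ρ₀ ρ₁ δ : ℝ}
    (h₀ : |a₀ - (x₀ - ρ₀ * (x₀ - x₁))| ≤ δ) (h₁ : |a₁ - (x₁ - ρ₁ * (x₁ - x₀))| ≤ δ) :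
    |a₀ - a₁| ≤ |ρ₁ + ρ₀ - 1| * |x₀ - x₁| + 2 * δ :=
  calc |a₀ - a₁|
      = |(a₀ - (x₀ - ρ₀ * (x₀ - x₁))) - (a₁ - (x₁ - ρ₁ * (x₁ - x₀)))
          + (ρ₁ + ρ₀ - 1) * (x₁ - x₀)| := by ring_nf
    _ ≤ |a₀ - (x₀ - ρ₀ * (x₀ - x₁))| + |a₁ - (x₁ - ρ₁ * (x₁ - x₀))|
          + |ρ₁ + ρ₀ - 1| * |x₀ - x₁| := by
        refine (abs_add_le _ _).trans ?_
        rw [abs_mul, abs_sub_comm x₁ x₀]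
        gcongr
        exact abs_sub _ _
    _ ≤ |ρ₁ + ρ₀ - 1| * |x₀ - x₁| + 2 * δ := by linarith

section Averages

variable {ι : Type*} {S : Finset ι}

lemma abs_sum_mul_sub_sum_mul_le {w f g : ι → ℝ} {δ : ℝ}
    (hw : ∀ j ∈ S, 0 ≤ w j) (hw₁ : ∑ j ∈ S, w j = 1) (hfg : ∀ j ∈ S, |f j - g j| ≤ δ) :
    |∑ j ∈ S, w j * f j - ∑ j ∈ S, w j * g j| ≤ δ :=
  calc |∑ j ∈ S, w j * f j - ∑ j ∈ S, w j * g j|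
      = |∑ j ∈ S, w j * (f j - g j)| := by simp only [← sum_sub_distrib, mul_sub]
    _ ≤ ∑ j ∈ S, w j * |f j - g j| := by
        refine (abs_sum_le_sum_abs _ _).trans (sum_le_sum fun j hj => ?_)
        rw [abs_mul, abs_of_nonneg (hw j hj)]
    _ ≤ ∑ j ∈ S, w j * δ := sum_le_sum fun j hj => mul_le_mul_of_nonneg_left (hfg j hj) (hw j hj)
    _ = δ := by rw [← sum_mul, hw₁, one_mul]

lemma abs_expect_sub_expect_le {f g : ι → ℝ} {δ : ℝ} (hS : S.Nonempty)
    (hfg : ∀ j ∈ S, |f j - g j| ≤ δ) : |𝔼 j ∈ S, f j - 𝔼 j ∈ S, g j| ≤ δ := by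
  rw [← expect_sub_distrib]
  exact (abs_expect_le _ _).trans (expect_le hS hfg)

lemma abs_expect_comp_sub_comp_expect_le {σ : ℝ → ℝ} {L : ℝ}
    (hσ : ∀ a b, |σ a - σ b| ≤ L * |a - b|) {z : ι → ℝ} {δ : ℝ} (hS : S.Nonempty)
    (hz : ∀ k ∈ S, |z k - 𝔼 j ∈ S, z j| ≤ δ) :
    |𝔼 k ∈ S, σ (z k) - σ (𝔼 j ∈ S, z j)| ≤ L * δ := by
  have hL := nonneg_of_abs_sub_le_mul_abs_sub hσ
  conv_lhs => rw [← expect_const hS (σ (𝔼 j ∈ S, z j))]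
  exact abs_expect_sub_expect_le hS fun k hk =>
    (hσ _ _).trans (mul_le_mul_of_nonneg_left (hz k hk) hL)

end Averages

lemma EuclideanSpace.norm_le_of_abs_apply_le {ι : Type*} [Fintype ι]
    {x y : EuclideanSpace ℝ ι} {A B : ℝ} (hA : 0 ≤ A) (hB : Nonempty ι → 0 ≤ B)
    (hxy : ∀ i, |x i| ≤ A * |y i| + B) : ‖x‖ ≤ A * ‖y‖ + √(Fintype.card ι) * B := by
  rcases isEmpty_or_nonempty ι with hι | hι
  · simp [EuclideanSpace.norm_eq, Fintype.card_eq_zero]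
  set u : EuclideanSpace ℝ ι := WithLp.toLp 2 fun i => A * |y i|
  set v : EuclideanSpace ℝ ι := WithLp.toLp 2 fun _ => B
  have hu : ‖u‖ = A * ‖y‖ := by
    simp [u, EuclideanSpace.norm_eq, mul_pow, ← mul_sum, Real.sqrt_mul (sq_nonneg A),
      Real.sqrt_sq hA]
  have hv : ‖v‖ = √(Fintype.card ι) * B := by
    simp [v, EuclideanSpace.norm_eq, Real.sqrt_mul, Real.sqrt_sq (hB hι)]
  have hx : ‖x‖ ≤ ‖u + v‖ := by
    simp only [EuclideanSpace.norm_eq]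
    gcongr with i
    simp only [u, v, PiLp.add_apply, Real.norm_eq_abs]
    exact (hxy i).trans (le_abs_self _)
  calc ‖x‖ ≤ ‖u + v‖ := hx
    _ ≤ ‖u‖ + ‖v‖ := norm_add_le u v
    _ = A * ‖y‖ + √(Fintype.card ι) * B := by rw [hu, hv]

lemma gmean_apply {V : Type*} {d : ℕ} (S : Finset V) (x : V → EuclideanSpace ℝ (Fin d))
    (i : Fin d) : gmean S x i = 𝔼 j ∈ S, x j i := by
  simp [gmean, expect_eq_sum_div_card, div_eq_inv_mul]

lemma map_gmean {V : Type*} {d d' : ℕ} (S : Finset V)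
    (W : EuclideanSpace ℝ (Fin d) →L[ℝ] EuclideanSpace ℝ (Fin d'))
    (x : V → EuclideanSpace ℝ (Fin d)) : W (gmean S x) = gmean S (fun j => W (x j)) := by
  simp [gmean, map_sum]

lemma mem_grp {V : Type*} [Fintype V] {s : V → Fin 2} {t : Fin 2} {k : V} :
    k ∈ grp s t ↔ s k = t := by
  simp [grp]

section Attention

variable {V : Type*} (s : V → Fin 2) (N : V → Finset V) (α : V → V → ℝ)

def crossAttn (k : V) : ℝ := ∑ j ∈ (N k).filter (fun j => s j ≠ s k), α k j

variable {s N α}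

lemma sum_mul_comp_eq_sub_crossAttn_mul {k : V} (hα : ∑ j ∈ N k, α k j = 1) {t u : Fin 2}
    (htu : t ≠ u) (hk : s k = t) (m : Fin 2 → ℝ) :
    ∑ j ∈ N k, α k j * m (s j) = m t - crossAttn s N α k * (m t - m u) := by
  have hcross : ∀ j ∈ (N k).filter (fun j => s j ≠ s k), α k j * m (s j) = α k j * m u := by
    intro j hj
    rw [mem_filter, hk] at hj
    rw [show s j = u by omega]
  have hsame : ∀ j ∈ (N k).filter (fun j => ¬s j ≠ s k), α k j * m (s j) = α k j * m t := by
    intro j hj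
    rw [mem_filter, not_not, hk] at hj
    rw [hj.2]
  have hsplit := sum_filter_add_sum_filter_not (N k) (fun j => s j ≠ s k) (α k)
  rw [← sum_filter_add_sum_filter_not (N k) (fun j => s j ≠ s k), sum_congr rfl hcross,
    sum_congr rfl hsame, ← sum_mul, ← sum_mul, crossAttn]
  linear_combination m t * hsplit + m t * hα

lemma crossAttn_eq_ite [DecidableEq V] {Sχ : Finset V}
    (hSχ : ∀ k, k ∈ Sχ ↔ ∃ j ∈ N k, s j ≠ s k) {αχ : ℝ}
    (hA2 : ∀ k ∈ Sχ, ∑ j ∈ (N k).filter (fun j => s j ≠ s k), α k j = αχ) (k : V) :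
    crossAttn s N α k = if k ∈ Sχ then αχ else 0 := by
  split_ifs with hk
  · exact hA2 k hk
  · refine sum_eq_zero fun j hj => absurd ((hSχ k).2 ?_) hk
    exact ⟨j, (mem_filter.1 hj).1, (mem_filter.1 hj).2⟩

lemma expect_crossAttn [Fintype V] [DecidableEq V] {Sχ : Finset V}
    (hSχ : ∀ k, k ∈ Sχ ↔ ∃ j ∈ N k, s j ≠ s k) {αχ : ℝ}
    (hA2 : ∀ k ∈ Sχ, ∑ j ∈ (N k).filter (fun j => s j ≠ s k), α k j = αχ) (t : Fin 2) :
    𝔼 k ∈ grp s t, crossAttn s N α k = (#(grp s t ∩ Sχ) : ℝ) / #(grp s t) * αχ := by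
  simp only [crossAttn_eq_ite hSχ hA2, expect_eq_sum_div_card, sum_ite_mem,
    sum_const, nsmul_eq_mul]
  ring

lemma abs_expect_aggregate_sub_le [Fintype V] (hαnn : ∀ k, ∀ j ∈ N k, 0 ≤ α k j)
    (hαsum : ∀ k, ∑ j ∈ N k, α k j = 1) {c : V → ℝ} {Δc : ℝ}
    (hΔc : ∀ j, |c j - 𝔼 l ∈ grp s (s j), c l| ≤ Δc) {t u : Fin 2} (htu : t ≠ u)
    (ht : (grp s t).Nonempty) :
    |𝔼 k ∈ grp s t, ∑ j ∈ N k, α k j * c j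
      - (𝔼 l ∈ grp s t, c l - (𝔼 k ∈ grp s t, crossAttn s N α k)
          * (𝔼 l ∈ grp s t, c l - 𝔼 l ∈ grp s u, c l))| ≤ Δc := by
  set m : Fin 2 → ℝ := fun t => 𝔼 l ∈ grp s t, c l
  have hnode : ∀ k ∈ grp s t,
      |∑ j ∈ N k, α k j * c j - (m t - crossAttn s N α k * (m t - m u))| ≤ Δc := by
    intro k hk
    rw [← sum_mul_comp_eq_sub_crossAttn_mul (hαsum k) htu (mem_grp.1 hk) m]
    exact abs_sum_mul_sub_sum_mul_le (hαnn k) (hαsum k) fun j _ => hΔc j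
  have hmix : 𝔼 k ∈ grp s t, (m t - crossAttn s N α k * (m t - m u))
      = m t - (𝔼 k ∈ grp s t, crossAttn s N α k) * (m t - m u) := by
    rw [expect_sub_distrib, expect_const ht, expect_mul]
  rw [← hmix]
  exact abs_expect_sub_expect_le ht hnode

theorem abs_expect_comp_sub_expect_comp_le [Fintype V] [DecidableEq V]
    (hαnn : ∀ k, ∀ j ∈ N k, 0 ≤ α k j) (hαsum : ∀ k, ∑ j ∈ N k, α k j = 1)
    {Sχ : Finset V} (hSχ : ∀ k, k ∈ Sχ ↔ ∃ j ∈ N k, s j ≠ s k) {αχ : ℝ}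
    (hA2 : ∀ k ∈ Sχ, ∑ j ∈ (N k).filter (fun j => s j ≠ s k), α k j = αχ)
    (hS₀ : (grp s 0).Nonempty) (hS₁ : (grp s 1).Nonempty)
    {σ : ℝ → ℝ} {L : ℝ} (hσ : ∀ a b, |σ a - σ b| ≤ L * |a - b|)
    {c z : V → ℝ} (hz : ∀ k, z k = ∑ j ∈ N k, α k j * c j) {Δc Δz : ℝ}
    (hΔc : ∀ j, |c j - 𝔼 l ∈ grp s (s j), c l| ≤ Δc)
    (hΔz : ∀ k, |z k - 𝔼 l ∈ grp s (s k), z l| ≤ Δz) :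
    |𝔼 k ∈ grp s 0, σ (z k) - 𝔼 k ∈ grp s 1, σ (z k)| ≤
      L * |(#(grp s 1 ∩ Sχ) : ℝ) / #(grp s 1) * αχ + (#(grp s 0 ∩ Sχ) : ℝ) / #(grp s 0) * αχ - 1|
        * |𝔼 l ∈ grp s 0, c l - 𝔼 l ∈ grp s 1, c l| + L * (2 * Δc + 2 * Δz) := by
  have hL := nonneg_of_abs_sub_le_mul_abs_sub hσ
  have hz₀ := abs_expect_aggregate_sub_le hαnn hαsum hΔc (by decide : (0 : Fin 2) ≠ 1) hS₀
  have hz₁ := abs_expect_aggregate_sub_le hαnn hαsum hΔc (by decide : (1 : Fin 2) ≠ 0) hS₁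
  rw [expect_crossAttn hSχ hA2] at hz₀ hz₁
  simp only [← hz] at hz₀ hz₁
  have hzdisp := abs_sub_le_of_abs_sub_mix_le hz₀ hz₁
  have hσ₀ := abs_expect_comp_sub_comp_expect_le hσ hS₀ fun k hk => mem_grp.1 hk ▸ hΔz k
  have hσ₁ := abs_expect_comp_sub_comp_expect_le hσ hS₁ fun k hk => mem_grp.1 hk ▸ hΔz k
  set z₀ := 𝔼 k ∈ grp s 0, z k
  set z₁ := 𝔼 k ∈ grp s 1, z k
  calc |𝔼 k ∈ grp s 0, σ (z k) - 𝔼 k ∈ grp s 1, σ (z k)|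
      ≤ |𝔼 k ∈ grp s 0, σ (z k) - σ z₀| + |σ z₀ - σ z₁| + |𝔼 k ∈ grp s 1, σ (z k) - σ z₁| := by
        linarith [abs_sub_le (𝔼 k ∈ grp s 0, σ (z k)) (σ z₀) (𝔼 k ∈ grp s 1, σ (z k)),
          abs_sub_le (σ z₀) (σ z₁) (𝔼 k ∈ grp s 1, σ (z k)),
          abs_sub_comm (𝔼 k ∈ grp s 1, σ (z k)) (σ z₁)]
    _ ≤ L * Δz + L * |z₀ - z₁| + L * Δz := by gcongr; exact hσ z₀ z₁
    _ ≤ _ := by linarith [mul_le_mul_of_nonneg_left hzdisp hL]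

end Attention

theorem gat_layer_disparity_bound_general
    {V : Type*} [Fintype V] [DecidableEq V] {F F' : ℕ}
    (s : V → Fin 2)
    (hS₀ : (grp s 0).Nonempty) (hS₁ : (grp s 1).Nonempty)
    (N : V → Finset V)
    (α : V → V → ℝ) (hαnn : ∀ k, ∀ j ∈ N k, 0 ≤ α k j)
    (hαsum : ∀ k, ∑ j ∈ N k, α k j = 1)
    (W : EuclideanSpace ℝ (Fin F) →L[ℝ] EuclideanSpace ℝ (Fin F'))
    (h : V → EuclideanSpace ℝ (Fin F))
    (c : V → EuclideanSpace ℝ (Fin F')) (hc : ∀ j, c j = W (h j))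
    (z : V → EuclideanSpace ℝ (Fin F')) (hz : ∀ k, z k = ∑ j ∈ N k, α k j • c j)
    (σ : ℝ → ℝ) (L : ℝ) (hσ : ∀ a b, |σ a - σ b| ≤ L * |a - b|)
    (h' : V → EuclideanSpace ℝ (Fin F')) (hh' : ∀ k i, h' k i = σ (z k i))
    (Δc Δz : ℝ)
    (hΔc : ∀ j, ∀ i, |c j i - gmean (grp s (s j)) c i| ≤ Δc)
    (hΔz : ∀ j, ∀ i, |z j i - gmean (grp s (s j)) z i| ≤ Δz)
    (Sχ : Finset V) (hSχ : ∀ k, k ∈ Sχ ↔ ∃ j ∈ N k, s j ≠ s k)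
    (αχ : ℝ)
    (hA2 : ∀ k ∈ Sχ, ∑ j ∈ (N k).filter (fun j => s j ≠ s k), α k j = αχ) :
    ‖gmean (grp s 0) h' - gmean (grp s 1) h'‖ ≤
      L * (‖W‖ *
            |((grp s 1 ∩ Sχ).card : ℝ) / ((grp s 1).card : ℝ) * αχ
              + ((grp s 0 ∩ Sχ).card : ℝ) / ((grp s 0).card : ℝ) * αχ - 1|
            * ‖gmean (grp s 0) h - gmean (grp s 1) h‖
          + 2 * Real.sqrt F' * Δc + 2 * Real.sqrt F' * Δz) := by
  have hL := nonneg_of_abs_sub_le_mul_abs_sub hσ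
  have hmean : ∀ t, gmean (grp s t) c = W (gmean (grp s t) h) := fun t => by
    rw [map_gmean]
    exact congrArg _ (funext hc)
  set A := L * |((grp s 1 ∩ Sχ).card : ℝ) / ((grp s 1).card : ℝ) * αχ
    + ((grp s 0 ∩ Sχ).card : ℝ) / ((grp s 0).card : ℝ) * αχ - 1|
  set B := L * (2 * Δc + 2 * Δz)
  have hcoord : ∀ i, |(gmean (grp s 0) h' - gmean (grp s 1) h') i|
      ≤ A * |(gmean (grp s 0) c - gmean (grp s 1) c) i| + B := fun i => by
    simp only [PiLp.sub_apply, gmean_apply, hh']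
    exact abs_expect_comp_sub_expect_comp_le hαnn hαsum hSχ hA2 hS₀ hS₁ hσ (c := fun j => c j i)
      (fun k => by simp [hz k]) (fun j => by simpa only [gmean_apply] using hΔc j i)
      (fun k => by simpa only [gmean_apply] using hΔz k i)
  have hB : Nonempty (Fin F') → 0 ≤ B := fun ⟨i⟩ => by
    obtain ⟨j, -⟩ := hS₀
    have := (abs_nonneg _).trans (hΔc j i)
    have := (abs_nonneg _).trans (hΔz j i)
    positivity
  calc ‖gmean (grp s 0) h' - gmean (grp s 1) h'‖
      ≤ A * ‖gmean (grp s 0) c - gmean (grp s 1) c‖ + √(Fintype.card (Fin F')) * B :=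
        EuclideanSpace.norm_le_of_abs_apply_le (by positivity) hB hcoord
    _ ≤ A * (‖W‖ * ‖gmean (grp s 0) h - gmean (grp s 1) h‖) + √F' * B := by
        rw [Fintype.card_fin, hmean, hmean, ← map_sub]
        gcongr
        exact W.le_opNorm _
    _ = _ := by ring

/-- Theorem 1: disparity bound for a GAT layer. `Sχ` is the set of nodes having at least one
neighbor of the opposite sensitive group, `αχ` the common total attention on inter-edges (A2),
and `Δc`, `Δz` the maximal deviations of assumption A1. The linear map `W` between Euclidean
spaces plays the role of the weight matrix and `‖W‖` is its largest singular value. -/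
theorem gat_layer_disparity_bound
    {V : Type*} [Fintype V] [DecidableEq V] {F F' : ℕ}
    (s : V → Fin 2)
    (hS₀ : (grp s 0).Nonempty) (hS₁ : (grp s 1).Nonempty)
    (N : V → Finset V) (hN : ∀ k, (N k).Nonempty)
    (α : V → V → ℝ) (hαnn : ∀ k, ∀ j ∈ N k, 0 ≤ α k j)
    (hαsum : ∀ k, ∑ j ∈ N k, α k j = 1)
    (W : EuclideanSpace ℝ (Fin F) →L[ℝ] EuclideanSpace ℝ (Fin F'))
    (h : V → EuclideanSpace ℝ (Fin F))
    (c : V → EuclideanSpace ℝ (Fin F')) (hc : ∀ j, c j = W (h j))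
    (z : V → EuclideanSpace ℝ (Fin F')) (hz : ∀ k, z k = ∑ j ∈ N k, α k j • c j)
    (σ : ℝ → ℝ) (L : ℝ) (hσ : ∀ a b, |σ a - σ b| ≤ L * |a - b|)
    (h' : V → EuclideanSpace ℝ (Fin F')) (hh' : ∀ k i, h' k i = σ (z k i))
    (Δc Δz : ℝ)
    (hΔc : ∀ j, ∀ i, |c j i - gmean (grp s (s j)) c i| ≤ Δc)
    (hΔz : ∀ j, ∀ i, |z j i - gmean (grp s (s j)) z i| ≤ Δz)
    (Sχ : Finset V) (hSχ : ∀ k, k ∈ Sχ ↔ ∃ j ∈ N k, s j ≠ s k)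
    (αχ : ℝ) (hαχ0 : 0 ≤ αχ) (hαχ1 : αχ ≤ 1)
    (hA2 : ∀ k ∈ Sχ, ∑ j ∈ (N k).filter (fun j => s j ≠ s k), α k j = αχ) :
    ‖gmean (grp s 0) h' - gmean (grp s 1) h'‖ ≤
      L * (‖W‖ *
            |((grp s 1 ∩ Sχ).card : ℝ) / ((grp s 1).card : ℝ) * αχ
              + ((grp s 0 ∩ Sχ).card : ℝ) / ((grp s 0).card : ℝ) * αχ - 1|
            * ‖gmean (grp s 0) h - gmean (grp s 1) h‖
          + 2 * Real.sqrt F' * Δc + 2 * Real.sqrt F' * Δz) :=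
  gat_layer_disparity_bound_general s hS₀ hS₁ N α hαnn hαsum W h c hc z hz σ L hσ h' hh' Δc Δz hΔc
    hΔz Sχ hSχ αχ hA2
end

section
/- Let V be a finite set of nodes partitioned by a binary sensitive attribute s : V → {0,1} into nonempty groups S₀ and S₁. Let each node k ∈ V have a nonempty neighborhood N(k) ⊆ V and attention coefficients α_{kj} ≥ 0 for j ∈ N(k) satisfying Σ_{j∈N(k)} α_{kj} = 1. Let c_j ∈ ℝ^{F'} with group means c̄₀, c̄₁, and let z_k = Σ_{j∈N(k)} α_{kj} c_j. Let S^χ be the set of nodes having at least one neighbor of the opposite sensitive group, S_s^χ = S_s ∩ S^χ, and R_s^χ = |S_s^χ|/|S_s| for s = 0,1. Assume ‖c_j − c̄_{s(j)}‖_∞ ≤ Δc for every j ∈ V, and assume there exists α^χ ∈ [0,1] such that for every node k ∈ S^χ, Σ_{j∈N(k), s(j)≠s(k)} α_{kj} = α^χ. Then ‖ (1/|S₁|) Σ_{j∈S₁} z_j − (1/|S₀|) Σ_{j∈S₀} z_j ‖₂ ≤ |(R₁^χ + R₀^χ) α^χ − 1| · ‖c̄₀ − c̄₁‖₂ + 2√(F')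 Δc. -/
open Finset

/-!
Write `c j = c̄ (s j) + e j`. The attention weights of `k` sum to one and put mass `α^χ` on
the opposite group when `k ∈ S^χ` and mass `0` otherwise, so
`z k = c̄ (s k) + β k • (c̄ (1 - s k) - c̄ (s k)) + ε k`
with `ε k` a convex combination of the `e j`. Averaging over `S_t` turns `β` into `R_t^χ α^χ`,
and the two group means differ by `((R₁^χ + R₀^χ) α^χ - 1) • (c̄₀ - c̄₁)` plus a difference of
two averages of `ε`. These lie in the ball of radius `√F' Δc`, which is convex and contains
every `e j` by the coordinatewise bound.
-/

theorem EuclideanSpace.norm_le_sqrt_card_mul_of_abs_le {ι : Type*} [Fintype ι]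
    {v : EuclideanSpace ℝ ι} {M : ℝ} (h : ∀ i, |v i| ≤ M) :
    ‖v‖ ≤ √(Fintype.card ι) * M := by
  cases isEmpty_or_nonempty ι
  · simp [EuclideanSpace.norm_eq]
  have hM : 0 ≤ M := (abs_nonneg _).trans (h (Classical.arbitrary ι))
  rw [EuclideanSpace.norm_eq, ← Real.sqrt_sq hM, ← Real.sqrt_mul (Nat.cast_nonneg _)]
  gcongr
  calc ∑ i, ‖v i‖ ^ 2 ≤ ∑ _ : ι, M ^ 2 := by
        gcongr with i
        exact (Real.norm_eq_abs _).trans_le (h i)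
    _ = Fintype.card ι * M ^ 2 := by simp

theorem norm_sum_smul_le_of_sum_eq_one {ι E : Type*} [SeminormedAddCommGroup E]
    [NormedSpace ℝ E] {t : Finset ι} {w : ι → ℝ} {x : ι → E} {B : ℝ}
    (hw₀ : ∀ i ∈ t, 0 ≤ w i) (hw₁ : ∑ i ∈ t, w i = 1) (hx : ∀ i ∈ t, ‖x i‖ ≤ B) :
    ‖∑ i ∈ t, w i • x i‖ ≤ B := by
  simpa using (convex_closedBall (0 : E) B).sum_mem hw₀ hw₁ (by simpa using hx)

theorem sum_smul_eq_add_smul_sub_add {ι L E : Type*} [AddCommGroup E] [Module ℝ E]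
    {N : Finset ι} {w : ι → ℝ} (hw : ∑ j ∈ N, w j = 1) (s : ι → L) [DecidableEq L]
    (m : L → E) (c : ι → E) {t t' : L} (ht' : ∀ j ∈ N, s j ≠ t → s j = t') :
    ∑ j ∈ N, w j • c j
      = m t + (∑ j ∈ N with s j ≠ t, w j) • (m t' - m t) + ∑ j ∈ N, w j • (c j - m (s j)) := by
  have hcross : ∑ j ∈ N, w j • (m (s j) - m t) = (∑ j ∈ N with s j ≠ t, w j) • (m t' - m t) := by
    rw [sum_smul, sum_filter]
    refine sum_congr rfl fun j hj => ?_
    by_cases hj' : s j = t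
    · simp [hj']
    · rw [if_pos hj', ht' j hj hj']
  calc ∑ j ∈ N, w j • c j
      = ∑ j ∈ N, (w j • m t + w j • (m (s j) - m t) + w j • (c j - m (s j))) :=
        sum_congr rfl fun j _ => by module
    _ = _ := by
      rw [sum_add_distrib, sum_add_distrib, ← sum_smul, hw, one_smul, hcross]

section GroupMean

variable {V : Type*} {d : ℕ}

theorem norm_gmean_le {S : Finset V} (hS : S.Nonempty) {x : V → EuclideanSpace ℝ (Fin d)}
    {B : ℝ} (hx : ∀ j ∈ S, ‖x j‖ ≤ B) : ‖gmean S x‖ ≤ B := by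
  rw [gmean, smul_sum]
  refine norm_sum_smul_le_of_sum_eq_one (fun _ _ => by positivity) ?_ hx
  simp [hS.card_pos.ne']

theorem gmean_eq_add_smul_add {S : Finset V} (hS : S.Nonempty)
    {x : V → EuclideanSpace ℝ (Fin d)} (u v : EuclideanSpace ℝ (Fin d)) (β : V → ℝ)
    (ε : V → EuclideanSpace ℝ (Fin d)) (hx : ∀ k ∈ S, x k = u + β k • v + ε k) :
    gmean S x = u + ((∑ k ∈ S, β k) / S.card) • v + gmean S ε := by
  have hcard : (S.card : ℝ) ≠ 0 := by exact_mod_cast hS.card_pos.ne'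
  rw [gmean, gmean, sum_congr rfl hx, sum_add_distrib, sum_add_distrib,
    sum_const, ← sum_smul, ← Nat.cast_smul_eq_nsmul ℝ, smul_add, smul_add, smul_smul,
    smul_smul, inv_mul_cancel₀ hcard, one_smul, inv_mul_eq_div]

end GroupMean

theorem norm_sub_le_of_eq_add_smul_sub_add {E : Type*} [SeminormedAddCommGroup E] [NormedSpace ℝ E]
    {a₀ a₁ m₀ m₁ e₀ e₁ : E} {r₀ r₁ B : ℝ} (h₀ : a₀ = m₀ + r₀ • (m₁ - m₀) + e₀)
    (h₁ : a₁ = m₁ + r₁ • (m₀ - m₁) + e₁) (he₀ : ‖e₀‖ ≤ B) (he₁ : ‖e₁‖ ≤ B) :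
    ‖a₁ - a₀‖ ≤ |r₁ + r₀ - 1| * ‖m₀ - m₁‖ + 2 * B := by
  have hdiff : a₁ - a₀ = (r₁ + r₀ - 1) • (m₀ - m₁) + (e₁ - e₀) := by
    rw [h₀, h₁]
    module
  calc ‖a₁ - a₀‖ ≤ ‖(r₁ + r₀ - 1) • (m₀ - m₁)‖ + (‖e₁‖ + ‖e₀‖) :=
        hdiff ▸ norm_add_le_of_le le_rfl (norm_sub_le _ _)
    _ ≤ |r₁ + r₀ - 1| * ‖m₀ - m₁‖ + 2 * B := by
      rw [norm_smul, Real.norm_eq_abs]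
      linarith

theorem aggregated_mean_disparity_bound_general
    {V : Type*} [Fintype V] [DecidableEq V] {F' : ℕ}
    (s : V → Fin 2)
    (hS₀ : (grp s 0).Nonempty) (hS₁ : (grp s 1).Nonempty)
    (N : V → Finset V)
    (α : V → V → ℝ) (hαnn : ∀ k, ∀ j ∈ N k, 0 ≤ α k j)
    (hαsum : ∀ k, ∑ j ∈ N k, α k j = 1)
    (c : V → EuclideanSpace ℝ (Fin F'))
    (z : V → EuclideanSpace ℝ (Fin F')) (hz : ∀ k, z k = ∑ j ∈ N k, α k j • c j)
    (Δc : ℝ)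
    (hΔc : ∀ j, ∀ i, |c j i - gmean (grp s (s j)) c i| ≤ Δc)
    (Sχ : Finset V) (hSχ : ∀ k, k ∈ Sχ ↔ ∃ j ∈ N k, s j ≠ s k)
    (αχ : ℝ)
    (hA2 : ∀ k ∈ Sχ, ∑ j ∈ (N k).filter (fun j => s j ≠ s k), α k j = αχ) :
    ‖gmean (grp s 1) z - gmean (grp s 0) z‖ ≤
      |(((grp s 1 ∩ Sχ).card : ℝ) / ((grp s 1).card : ℝ)
          + ((grp s 0 ∩ Sχ).card : ℝ) / ((grp s 0).card : ℝ)) * αχ - 1|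
        * ‖gmean (grp s 0) c - gmean (grp s 1) c‖ + 2 * Real.sqrt F' * Δc := by
  set m : Fin 2 → EuclideanSpace ℝ (Fin F') := fun t => gmean (grp s t) c
  set ε : V → EuclideanSpace ℝ (Fin F') := fun k => ∑ j ∈ N k, α k j • (c j - m (s j))
  have hε : ∀ k, ‖ε k‖ ≤ √F' * Δc := fun k =>
    norm_sum_smul_le_of_sum_eq_one (hαnn k) (hαsum k) fun j _ => by
      simpa using EuclideanSpace.norm_le_sqrt_card_mul_of_abs_le (v := c j - m (s j))
        fun i => by simpa using hΔc j i
  have hcross : ∀ k, ∑ j ∈ N k with s j ≠ s k, α k j = if k ∈ Sχ then αχ else 0 := by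
    intro k
    split_ifs with hk
    · exact hA2 k hk
    · rw [filter_false_of_mem fun j hj hne => hk ((hSχ k).2 ⟨j, hj, hne⟩), sum_empty]
  have hmean : ∀ t, (grp s t).Nonempty → gmean (grp s t) z
      = m t + (((grp s t ∩ Sχ).card : ℝ) / (grp s t).card * αχ) • (m (1 - t) - m t)
        + gmean (grp s t) ε := by
    intro t ht
    rw [gmean_eq_add_smul_add ht (m t) (m (1 - t) - m t) (fun k => if k ∈ Sχ then αχ else 0) ε]
    · simp [sum_ite_mem, div_mul_eq_mul_div]
    · intro k hk
      obtain rfl : s k = t := (mem_filter.1 hk).2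
      rw [hz, sum_smul_eq_add_smul_sub_add (hαsum k) s m c (t := s k) (t' := 1 - s k)
        fun j _ _ => by omega, hcross k]
  have hbound := norm_sub_le_of_eq_add_smul_sub_add (hmean 0 hS₀) (hmean 1 hS₁)
    (norm_gmean_le hS₀ fun k _ => hε k) (norm_gmean_le hS₁ fun k _ => hε k)
  rw [add_mul, mul_assoc]
  simpa using hbound

/-- Equation (29) in the appendix proof of Theorem 1: the disparity between the group means of
the attention-aggregated representations is bounded by
`|(R₁^χ + R₀^χ) α^χ - 1| ‖c̄₀ - c̄₁‖₂ + 2 √F' Δc`. -/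
theorem aggregated_mean_disparity_bound
    {V : Type*} [Fintype V] [DecidableEq V] {F' : ℕ}
    (s : V → Fin 2)
    (hS₀ : (grp s 0).Nonempty) (hS₁ : (grp s 1).Nonempty)
    (N : V → Finset V) (hN : ∀ k, (N k).Nonempty)
    (α : V → V → ℝ) (hαnn : ∀ k, ∀ j ∈ N k, 0 ≤ α k j)
    (hαsum : ∀ k, ∑ j ∈ N k, α k j = 1)
    (c : V → EuclideanSpace ℝ (Fin F'))
    (z : V → EuclideanSpace ℝ (Fin F')) (hz : ∀ k, z k = ∑ j ∈ N k, α k j • c j)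
    (Δc : ℝ)
    (hΔc : ∀ j, ∀ i, |c j i - gmean (grp s (s j)) c i| ≤ Δc)
    (Sχ : Finset V) (hSχ : ∀ k, k ∈ Sχ ↔ ∃ j ∈ N k, s j ≠ s k)
    (αχ : ℝ) (hαχ0 : 0 ≤ αχ) (hαχ1 : αχ ≤ 1)
    (hA2 : ∀ k ∈ Sχ, ∑ j ∈ (N k).filter (fun j => s j ≠ s k), α k j = αχ) :
    ‖gmean (grp s 1) z - gmean (grp s 0) z‖ ≤
      |(((grp s 1 ∩ Sχ).card : ℝ) / ((grp s 1).card : ℝ)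
          + ((grp s 0 ∩ Sχ).card : ℝ) / ((grp s 0).card : ℝ)) * αχ - 1|
        * ‖gmean (grp s 0) c - gmean (grp s 1) c‖ + 2 * Real.sqrt F' * Δc :=
  aggregated_mean_disparity_bound_general s hS₀ hS₁ N α hαnn hαsum c z hz Δc hΔc Sχ hSχ αχ hA2
end

section
/- Let (Ω, 𝔽, μ) be a probability space with random variables ŷ : Ω → [0,1], ĉ : Ω → {0,1}, and s : Ω → {0,1}. Assume ĉ and s are conditionally independent given ŷ, that μ-almost surely the conditional expectation of the indicator 1_{ĉ=1} given ŷ equals ŷ (i.e., P(ĉ = 1 | ŷ) = ŷ a.s.), and that μ(s = 0) > 0. Then the conditional probability of the event {ĉ = 1} given the event {s = 0} equals the conditional expectation of ŷ given the event {s = 0}: μ(ĉ = 1 | s = 0) = E[ŷ | s = 0]. -/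
/-!
Write `𝒢` for the σ-algebra generated by `ŷ`. Conditional independence factors
`P(ĉ = 1, s = 0 | 𝒢)` as `P(ĉ = 1 | 𝒢) · P(s = 0 | 𝒢) = ŷ · P(s = 0 | 𝒢)`; integrating, and
pulling the `𝒢`-measurable factor `ŷ` back inside the conditional expectation, gives
`μ(ĉ = 1, s = 0) = E[ŷ · 1_{s = 0}]`.
-/

open MeasureTheory ProbabilityTheory

namespace MeasureTheory

variable {Ω : Type*} {m m₀ : MeasurableSpace Ω} {μ : Measure Ω}

theorem integral_mul_condExp_of_stronglyMeasurable_left (hm : m ≤ m₀)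
    [SigmaFinite (μ.trim hm)] {f g : Ω → ℝ} (hf : StronglyMeasurable[m] f)
    (hfg : Integrable (f * g) μ) (hg : Integrable g μ) :
    ∫ ω, f ω * (μ[g | m]) ω ∂μ = ∫ ω, f ω * g ω ∂μ :=
  (integral_congr_ae (condExp_mul_of_stronglyMeasurable_left hf hfg hg).symm).trans
    (integral_condExp hm)

theorem integral_mul_condExp_indicator [IsFiniteMeasure μ] (hm : m ≤ m₀)
    {f : Ω → ℝ} (hf : StronglyMeasurable[m] f) (hfi : Integrable f μ) {s : Set Ω}
    (hs : MeasurableSet s) :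
    ∫ ω, f ω * (μ⟦s | m⟧) ω ∂μ = ∫ ω in s, f ω ∂μ := by
  have hmul : f * s.indicator 1 = s.indicator f := by
    ext ω
    by_cases hω : ω ∈ s <;> simp [hω]
  rw [integral_mul_condExp_of_stronglyMeasurable_left hm hf (hmul ▸ hfi.indicator hs)
    ((integrable_const 1).indicator hs), ← integral_indicator hs]
  exact congrArg (integral μ) hmul

end MeasureTheory

namespace ProbabilityTheory

variable {Ω : Type*} {m m₀ : MeasurableSpace Ω} [StandardBorelSpace Ω] {μ : Measure Ω}
  [IsFiniteMeasure μ] {hm : m ≤ m₀} {s t : Set Ω}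

theorem CondIndepSet.measureReal_inter_eq_integral_mul (h : CondIndepSet m hm s t μ)
    (hs : MeasurableSet s) (ht : MeasurableSet t) :
    μ.real (s ∩ t) = ∫ ω, (μ⟦s | m⟧) ω * (μ⟦t | m⟧) ω ∂μ := by
  rw [← integral_indicator_one (hs.inter ht), ← integral_condExp hm]
  exact integral_congr_ae ((condIndepSet_iff m hm s t hs ht μ).mp h)

theorem CondIndepSet.measureReal_inter_eq_setIntegral (h : CondIndepSet m hm s t μ)
    (hs : MeasurableSet s) (ht : MeasurableSet t) {f : Ω → ℝ} (hf : StronglyMeasurable[m] f)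
    (hsf : μ⟦s | m⟧ =ᵐ[μ] f) :
    μ.real (s ∩ t) = ∫ ω in t, f ω ∂μ := by
  calc μ.real (s ∩ t) = ∫ ω, (μ⟦s | m⟧) ω * (μ⟦t | m⟧) ω ∂μ :=
        h.measureReal_inter_eq_integral_mul hs ht
    _ = ∫ ω, f ω * (μ⟦t | m⟧) ω ∂μ := by
        refine integral_congr_ae ?_
        filter_upwards [hsf] with ω hω
        rw [hω]
    _ = ∫ ω in t, f ω ∂μ :=
        integral_mul_condExp_indicator hm hf (integrable_condExp.congr hsf) ht

end ProbabilityTheory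

theorem statistical_parity_special_case_general
    {Ω : Type*} [MeasurableSpace Ω] [StandardBorelSpace Ω]
    (μ : Measure Ω) [IsProbabilityMeasure μ]
    (yhat : Ω → ℝ) (chat sens : Ω → Bool)
    (hym : Measurable yhat) (hcm : Measurable chat) (hsm : Measurable sens)
    (hci : ProbabilityTheory.CondIndepFun (MeasurableSpace.comap yhat inferInstance)
      hym.comap_le chat sens μ)
    (hcond : μ[(fun ω => if chat ω = true then (1 : ℝ) else 0) |
        MeasurableSpace.comap yhat inferInstance] =ᵐ[μ] yhat) :
    (μ ({ω | chat ω = true} ∩ {ω | sens ω = false})).toReal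
        / (μ {ω | sens ω = false}).toReal
      = (∫ ω in {ω | sens ω = false}, yhat ω ∂μ) / (μ {ω | sens ω = false}).toReal := by
  have hC : MeasurableSet {ω | chat ω = true} := hcm (measurableSet_singleton true)
  have hS : MeasurableSet {ω | sens ω = false} := hsm (measurableSet_singleton false)
  have hindep := (condIndepFun_iff_condIndepSet_preimage hcm hsm).mp hci {true} {false}
    (measurableSet_singleton true) (measurableSet_singleton false)
  have hindicator : {ω | chat ω = true}.indicator (fun _ => (1 : ℝ))
      = fun ω => if chat ω = true then (1 : ℝ) else 0 := by
    ext ω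
    simp [Set.indicator_apply]
  have hy : StronglyMeasurable[MeasurableSpace.comap yhat inferInstance] yhat :=
    (comap_measurable yhat).stronglyMeasurable
  rw [← measureReal_def]
  congr 1
  exact hindep.measureReal_inter_eq_setIntegral hC hS hy (hindicator ▸ hcond)

/-- The derivation in Section 4 of the paper: if `chat` (the hard prediction ĉ) and `sens`
(the sensitive attribute s) are conditionally independent given `yhat` (the soft prediction ŷ,
i.e. the Markov chain s → ŷ → ĉ holds), and `P(ĉ = 1 | ŷ) = ŷ` almost surely, then the
conditional probability `μ(ĉ = 1 | s = 0)` equals the conditional expectation `E[ŷ | s = 0]`.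
Here the values `1` and `0` of the binary variables ĉ and s are encoded as `true` and
`false` respectively, conditional probability given the event `{s = 0}` is
`μ({ĉ = 1} ∩ {s = 0}) / μ({s = 0})`, and `E[ŷ | s = 0] = (1/μ({s = 0})) ∫_{s = 0} ŷ dμ`. -/
theorem statistical_parity_special_case
    {Ω : Type*} [MeasurableSpace Ω] [StandardBorelSpace Ω]
    (μ : Measure Ω) [IsProbabilityMeasure μ]
    (yhat : Ω → ℝ) (chat sens : Ω → Bool)
    (hym : Measurable yhat) (hcm : Measurable chat) (hsm : Measurable sens)
    (hy01 : ∀ ω, yhat ω ∈ Set.Icc (0 : ℝ) 1)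
    (hci : ProbabilityTheory.CondIndepFun (MeasurableSpace.comap yhat inferInstance)
      hym.comap_le chat sens μ)
    (hcond : μ[(fun ω => if chat ω = true then (1 : ℝ) else 0) |
        MeasurableSpace.comap yhat inferInstance] =ᵐ[μ] yhat)
    (hs0 : 0 < μ {ω | sens ω = false}) :
    (μ ({ω | chat ω = true} ∩ {ω | sens ω = false})).toReal
        / (μ {ω | sens ω = false}).toReal
      = (∫ ω in {ω | sens ω = false}, yhat ω ∂μ) / (μ {ω | sens ω = false}).toReal :=
  statistical_parity_special_case_general μ yhat chat sens hym hcm hsm hci hcond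
end
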